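/- Let N be a finite nonempty player set, for each nonempty S ⊆ N let a_S < b_S be reals with μ_S = (a_S + b_S)/2, and let r : N → ℝ with r_i ≥ 0 for all i and r(N) = 1. Then for every nonempty S ⊆ N, the pushforward of Unif[a_N, b_N] under the map z ↦ r(S)·z second-order stochastically dominates Unif[a_S, b_S] if and only if r(S)·a_N ≥ a_S and r(S)·μ_N ≥ μ_S (equivalently r(S) ≥ max{μ_S/μ_N, a_S/a_N} when a_N, μ_N > 0). -/

import Mathlib

open MeasureTheory ProbabilityTheory
open scoped NNReal ENNReal

/-- `P` second-order stochastically dominates `Q`. -/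
def SSD (P Q : Measure ℝ) : Prop :=
  ∀ u : ℝ, (∫ z in Set.Iic u, (cdf P z - cdf Q z)) ≤ 0

/-- The uniform probability measure on the interval `[a, b]`. -/
noncomputable def unif (a b : ℝ) : Measure ℝ :=
  (ENNReal.ofReal (b - a))⁻¹ • (volume.restrict (Set.Icc a b))

/-!
The image of `Unif[A, B]` under `z ↦ c z` is `Unif[cA, cB]` for `c > 0` and the point mass at `0`
for `c = 0`. For `Unif[α, β]` (a point mass when `α = β`) the function `u ↦ ∫_{-∞}^u F` vanishes
up to `α`, is the parabola `(u - α)² / (2(β - α))` on `[α, β]` and equals `u - (α + β)/2` beyond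
`β`. Comparing two such functions, large `u` forces the mean condition and `u` just above `α`
forces `a ≤ α`; conversely, these two conditions give the inequality on every piece.
-/

open Set

section SecondOrderCdf

variable {μ : Measure ℝ} {x u : ℝ}

lemma cdf_eq_zero_of_le (hx : cdf μ x = 0) {z : ℝ} (hz : z ≤ x) : cdf μ z = 0 :=
  le_antisymm (hx ▸ monotone_cdf μ hz) (cdf_nonneg μ z)

lemma integrableOn_Iic_cdf (hx : cdf μ x = 0) (u : ℝ) : IntegrableOn (cdf μ) (Iic u) := by
  have hleft : IntegrableOn (cdf μ) (Iic x) :=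
    integrableOn_zero.congr_fun (fun z hz => (cdf_eq_zero_of_le hx hz).symm) measurableSet_Iic
  have hright : IntegrableOn (cdf μ) (Icc x u) :=
    (monotone_cdf μ).locallyIntegrable.integrableOn_isCompact isCompact_Icc
  refine (hleft.union hright).mono_set fun z hz => ?_
  rcases le_total z x with h | h
  exacts [Or.inl h, Or.inr ⟨h, hz⟩]

lemma setIntegral_Iic_cdf_of_le (hx : cdf μ x = 0) (hu : u ≤ x) :
    ∫ z in Iic u, cdf μ z = 0 :=
  setIntegral_eq_zero_of_forall_eq_zero fun _ hz => cdf_eq_zero_of_le hx (le_trans hz hu)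

lemma setIntegral_Iic_cdf_eq_intervalIntegral (hx : cdf μ x = 0) (hxu : x ≤ u) :
    ∫ z in Iic u, cdf μ z = ∫ z in x..u, cdf μ z := by
  rw [← Iic_union_Ioc_eq_Iic hxu, setIntegral_union (Iic_disjoint_Ioc le_rfl) measurableSet_Ioc
    (integrableOn_Iic_cdf hx x) ((integrableOn_Iic_cdf hx u).mono_set Ioc_subset_Iic_self),
    setIntegral_Iic_cdf_of_le hx le_rfl, zero_add, intervalIntegral.integral_of_le hxu]

lemma ssd_iff_forall_setIntegral_cdf_le {P Q : Measure ℝ}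
    (hP : ∀ u, IntegrableOn (cdf P) (Iic u)) (hQ : ∀ u, IntegrableOn (cdf Q) (Iic u)) :
    SSD P Q ↔ ∀ u, ∫ z in Iic u, cdf P z ≤ ∫ z in Iic u, cdf Q z :=
  forall_congr' fun u => by rw [integral_sub (hP u) (hQ u), sub_nonpos]

end SecondOrderCdf

section Uniform

variable {a b : ℝ}

lemma isProbabilityMeasure_unif (hab : a < b) : IsProbabilityMeasure (unif a b) := by
  constructor
  rw [unif, Measure.smul_apply, Measure.restrict_apply_univ, Real.volume_Icc, smul_eq_mul,
    ENNReal.inv_mul_cancel (by simpa using hab) ENNReal.ofReal_ne_top]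

lemma unif_Iic (hab : a < b) (z : ℝ) :
    unif a b (Iic z) = ENNReal.ofReal ((min z b - a) / (b - a)) := by
  rw [unif, Measure.smul_apply, Measure.restrict_apply measurableSet_Iic, inter_comm,
    ← Ici_inter_Iic, inter_assoc, Iic_inter_Iic, Ici_inter_Iic, min_comm, Real.volume_Icc, smul_eq_mul, ENNReal.ofReal_div_of_pos (sub_pos.2 hab),
    ENNReal.div_eq_inv_mul]

lemma cdf_unif (hab : a < b) (z : ℝ) :
    cdf (unif a b) z = max 0 ((min z b - a) / (b - a)) := by
  have := isProbabilityMeasure_unif hab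
  rw [cdf_eq_real, measureReal_def, unif_Iic hab, ENNReal.toReal_ofReal', max_comm]

lemma cdf_unif_of_le (hab : a < b) {z : ℝ} (hz : z ≤ a) : cdf (unif a b) z = 0 := by
  rw [cdf_unif hab, max_eq_left]
  exact div_nonpos_of_nonpos_of_nonneg (by linarith [min_le_left z b]) (sub_pos.2 hab).le

lemma cdf_unif_of_mem_Icc (hab : a < b) {z : ℝ} (hz : z ∈ Icc a b) :
    cdf (unif a b) z = (z - a) / (b - a) := by
  rw [cdf_unif hab, min_eq_left hz.2, max_eq_right (div_nonneg (sub_nonneg.2 hz.1) (sub_pos.2 hab).le)]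

lemma cdf_unif_of_ge (hab : a < b) {z : ℝ} (hz : b ≤ z) : cdf (unif a b) z = 1 := by
  rw [cdf_unif hab, min_eq_right hz, div_self (sub_pos.2 hab).ne', max_eq_right zero_le_one]

lemma map_const_mul_unif (hab : a < b) {c : ℝ} (hc : 0 < c) :
    (unif a b).map (c * ·) = unif (c * a) (c * b) := by
  have := isProbabilityMeasure_unif hab
  have hcab : c * a < c * b := mul_lt_mul_of_pos_left hab hc
  refine Measure.ext_of_Iic _ _ fun z => ?_
  have hpre : (c * ·) ⁻¹' Iic z = Iic (z / c) := by
    ext x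
    simp only [mem_preimage, mem_Iic, le_div_iff₀ hc, mul_comm]
  have hscale : min z (c * b) - c * a = c * (min (z / c) b - a) := by
    rw [mul_sub, mul_min_of_nonneg _ _ hc.le, mul_div_cancel₀ z hc.ne']
  rw [Measure.map_apply (measurable_const_mul c) measurableSet_Iic, hpre, unif_Iic hab,
    unif_Iic hcab, hscale, ← mul_sub, mul_div_mul_left _ _ hc.ne']

lemma map_zero_mul_unif (hab : a < b) : (unif a b).map (fun z => 0 * z) = Measure.dirac 0 := by
  have := isProbabilityMeasure_unif hab
  simp only [zero_mul, Measure.map_const, measure_univ, one_smul]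

end Uniform

section IntegratedCdf

/-- For `a = b` this is the integrated cdf of the point mass at `a`. -/
noncomputable def unifIntegratedCdf (a b u : ℝ) : ℝ :=
  if u ≤ a then 0 else if u ≤ b then (u - a) ^ 2 / (2 * (b - a)) else u - (a + b) / 2

variable {a b u : ℝ}

lemma unifIntegratedCdf_of_le (hu : u ≤ a) : unifIntegratedCdf a b u = 0 := if_pos hu

lemma unifIntegratedCdf_of_mem_Ioc (hu : u ∈ Ioc a b) :
    unifIntegratedCdf a b u = (u - a) ^ 2 / (2 * (b - a)) := by
  rw [unifIntegratedCdf, if_neg (not_le.2 hu.1), if_pos hu.2]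

lemma unifIntegratedCdf_of_ge (hab : a ≤ b) (hu : b ≤ u) :
    unifIntegratedCdf a b u = u - (a + b) / 2 := by
  rcases hu.eq_or_lt with rfl | hbu
  · rcases hab.eq_or_lt with rfl | hab
    · rw [unifIntegratedCdf_of_le le_rfl]; ring
    · rw [unifIntegratedCdf_of_mem_Ioc ⟨hab, le_rfl⟩]
      field_simp [(sub_pos.2 hab).ne']
      ring
  · rw [unifIntegratedCdf, if_neg (by linarith), if_neg (not_le.2 hbu)]

lemma unifIntegratedCdf_self (a u : ℝ) : unifIntegratedCdf a a u = max (u - a) 0 := by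
  rcases le_total u a with hu | hu
  · rw [unifIntegratedCdf_of_le hu, max_eq_right (sub_nonpos.2 hu)]
  · rw [unifIntegratedCdf_of_ge le_rfl hu, max_eq_left (sub_nonneg.2 hu)]; ring

lemma unifIntegratedCdf_pos (hab : a ≤ b) (hu : a < u) : 0 < unifIntegratedCdf a b u := by
  rcases le_or_gt u b with hub | hbu
  · rw [unifIntegratedCdf_of_mem_Ioc ⟨hu, hub⟩]
    have : 0 < b - a := by linarith
    positivity
  · rw [unifIntegratedCdf_of_ge hab hbu.le]; linarith

lemma unifIntegratedCdf_nonneg (hab : a ≤ b) : 0 ≤ unifIntegratedCdf a b u := by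
  rcases le_or_gt u a with hu | hu
  exacts [(unifIntegratedCdf_of_le hu).ge, (unifIntegratedCdf_pos hab hu).le]

lemma sub_le_unifIntegratedCdf (hab : a ≤ b) : u - (a + b) / 2 ≤ unifIntegratedCdf a b u := by
  rcases le_or_gt u a with hua | hau
  · rw [unifIntegratedCdf_of_le hua]; linarith
  rcases le_or_gt u b with hub | hbu
  · rw [unifIntegratedCdf_of_mem_Ioc ⟨hau, hub⟩, le_div_iff₀ (by linarith)]
    nlinarith [sq_nonneg (b - u)]
  · rw [unifIntegratedCdf_of_ge hab hbu.le]

lemma intervalIntegral_cdf_unif (hab : a < b) (hu : u ∈ Icc a b) :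
    ∫ z in a..u, cdf (unif a b) z = (u - a) ^ 2 / (2 * (b - a)) := by
  have hcdf : EqOn (cdf (unif a b)) (fun z => (z - a) / (b - a)) (uIcc a u) := fun z hz =>
    cdf_unif_of_mem_Icc hab ⟨(uIcc_of_le hu.1 ▸ hz).1, (uIcc_of_le hu.1 ▸ hz).2.trans hu.2⟩
  rw [intervalIntegral.integral_congr hcdf, intervalIntegral.integral_div,
    intervalIntegral.integral_comp_sub_right (fun z => z), integral_id]
  field_simp [(sub_pos.2 hab).ne']
  ring

lemma setIntegral_Iic_cdf_unif (hab : a < b) (u : ℝ) :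
    ∫ z in Iic u, cdf (unif a b) z = unifIntegratedCdf a b u := by
  have ha := cdf_unif_of_le hab le_rfl
  rcases le_or_gt u a with hua | hau
  · rw [setIntegral_Iic_cdf_of_le ha hua, unifIntegratedCdf_of_le hua]
  rw [setIntegral_Iic_cdf_eq_intervalIntegral ha hau.le]
  rcases le_or_gt u b with hub | hbu
  · rw [intervalIntegral_cdf_unif hab ⟨hau.le, hub⟩, unifIntegratedCdf_of_mem_Ioc ⟨hau, hub⟩]
  have hone : EqOn (cdf (unif a b)) 1 (uIcc b u) := fun z hz =>
    cdf_unif_of_ge hab (uIcc_of_le hbu.le ▸ hz).1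
  rw [← intervalIntegral.integral_add_adjacent_intervals (b := b)
      (monotone_cdf _).intervalIntegrable (monotone_cdf _).intervalIntegrable,
    intervalIntegral_cdf_unif hab ⟨hab.le, le_rfl⟩, intervalIntegral.integral_congr hone,
    unifIntegratedCdf_of_ge hab.le hbu.le]
  simp only [Pi.one_apply, intervalIntegral.integral_const, smul_eq_mul, mul_one]
  field_simp [(sub_pos.2 hab).ne']
  ring

lemma cdf_dirac (x z : ℝ) : cdf (Measure.dirac x) z = (Ici x).indicator 1 z := by
  rw [cdf_eq_real, measureReal_def, Measure.dirac_apply' _ measurableSet_Iic]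
  by_cases h : x ≤ z <;> simp [h]

lemma setIntegral_Iic_cdf_dirac (x u : ℝ) :
    ∫ z in Iic u, cdf (Measure.dirac x) z = unifIntegratedCdf x x u := by
  simp_rw [cdf_dirac]
  rw [integral_indicator_one measurableSet_Ici, measureReal_restrict_apply measurableSet_Ici,
    Ici_inter_Iic, Real.volume_real_Icc, unifIntegratedCdf_self]

end IntegratedCdf

section Comparison

variable {a b α β : ℝ}

lemma unifIntegratedCdf_le_of_le (hab : a < b) (hαβ : α ≤ β) (ha : a ≤ α)
    (hmean : a + b ≤ α + β) (u : ℝ) : unifIntegratedCdf α β u ≤ unifIntegratedCdf a b u := by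
  rcases le_or_gt u α with huα | hαu
  · rw [unifIntegratedCdf_of_le huα]
    exact unifIntegratedCdf_nonneg hab.le
  rcases le_or_gt β u with hβu | huβ
  · rw [unifIntegratedCdf_of_ge hαβ hβu]
    linarith [sub_le_unifIntegratedCdf (u := u) hab.le]
  rw [unifIntegratedCdf_of_mem_Ioc ⟨hαu, huβ.le⟩]
  have hu : 0 ≤ u - α := by linarith
  have hβ : 0 ≤ β - u := by linarith
  rcases le_or_gt u b with hub | hbu
  · rw [unifIntegratedCdf_of_mem_Ioc ⟨ha.trans_lt hαu, hub⟩,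
      div_le_div_iff₀ (by linarith) (by linarith)]
    have hα : 0 ≤ α - a := by linarith
    nlinarith [mul_nonneg (mul_nonneg hα hu) hβ, mul_nonneg (mul_nonneg hα hα) (sub_nonneg.2 hαβ),
      mul_nonneg (sq_nonneg (u - α)) (by linarith : (0 : ℝ) ≤ β - α + 2 * (α - a) - (b - a))]
  · rw [unifIntegratedCdf_of_ge hab.le hbu.le, div_le_iff₀ (by linarith)]
    nlinarith [mul_nonneg hu hβ]

lemma le_of_forall_unifIntegratedCdf_le (hab : a < b) (hαβ : α ≤ β)
    (h : ∀ u, unifIntegratedCdf α β u ≤ unifIntegratedCdf a b u) : a ≤ α ∧ a + b ≤ α + β := by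
  constructor
  · by_contra! hαa
    have := h ((α + a) / 2)
    rw [unifIntegratedCdf_of_le (a := a) (b := b) (by linarith)] at this
    linarith [unifIntegratedCdf_pos hαβ (u := (α + a) / 2) (by linarith)]
  · have := h (max b β)
    rw [unifIntegratedCdf_of_ge hαβ (le_max_right _ _),
      unifIntegratedCdf_of_ge hab.le (le_max_left _ _)] at this
    linarith

lemma forall_unifIntegratedCdf_le_iff (hab : a < b) (hαβ : α ≤ β) :
    (∀ u, unifIntegratedCdf α β u ≤ unifIntegratedCdf a b u) ↔ a ≤ α ∧ a + b ≤ α + β :=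
  ⟨le_of_forall_unifIntegratedCdf_le hab hαβ, fun h => unifIntegratedCdf_le_of_le hab hαβ h.1 h.2⟩

end Comparison

theorem ssd_map_const_mul_unif_iff {A B a b c : ℝ} (hAB : A < B) (hab : a < b) (hc : 0 ≤ c) :
    SSD ((unif A B).map (c * ·)) (unif a b) ↔ a ≤ c * A ∧ (a + b) / 2 ≤ c * ((A + B) / 2) := by
  have hQ := integrableOn_Iic_cdf (cdf_unif_of_le hab le_rfl)
  have hmean : (a + b) / 2 ≤ c * ((A + B) / 2) ↔ a + b ≤ c * A + c * B := by
    constructor <;> intro <;> linarith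
  rw [hmean]
  rcases hc.eq_or_lt with rfl | hc
  · have hP := integrableOn_Iic_cdf (μ := Measure.dirac 0) (x := -1) (by simp [cdf_dirac])
    rw [map_zero_mul_unif hAB, ssd_iff_forall_setIntegral_cdf_le hP hQ]
    simp only [setIntegral_Iic_cdf_dirac, setIntegral_Iic_cdf_unif hab,
      forall_unifIntegratedCdf_le_iff hab le_rfl, zero_mul, add_zero]
  · have hcAB : c * A < c * B := mul_lt_mul_of_pos_left hAB hc
    rw [map_const_mul_unif hAB hc,
      ssd_iff_forall_setIntegral_cdf_le (integrableOn_Iic_cdf (cdf_unif_of_le hcAB le_rfl)) hQ]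
    simp only [setIntegral_Iic_cdf_unif hab, setIntegral_Iic_cdf_unif hcAB,
      forall_unifIntegratedCdf_le_iff hab hcAB.le]

theorem ssd_core_r_uniform_iff_general {N : Type*} [Fintype N]
    (a b : Finset N → ℝ)
    (hab : ∀ S : Finset N, S.Nonempty → a S < b S)
    (r : N → ℝ) (hr : ∀ i, 0 ≤ r i) :
    ∀ S : Finset N, S.Nonempty →
      (SSD ((unif (a Finset.univ) (b Finset.univ)).map
            (fun z => (∑ i ∈ S, r i) * z))
          (unif (a S) (b S)) ↔
        a S ≤ (∑ i ∈ S, r i) * a Finset.univ ∧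
          (a S + b S) / 2 ≤ (∑ i ∈ S, r i) * ((a Finset.univ + b Finset.univ) / 2)) :=
  fun S hS => ssd_map_const_mul_unif_iff (hab _ (hS.mono (Finset.subset_univ S))) (hab S hS)
    (Finset.sum_nonneg fun i _ => hr i)

/-- For uniformly distributed coalitional values, a stochastic payoff without transfer
payments SSD-dominates the value of `S` iff `r(S)·a_N ≥ a_S` and `r(S)·μ_N ≥ μ_S`. -/
theorem ssd_core_r_uniform_iff {N : Type*} [Fintype N] [DecidableEq N] [Nonempty N]
    (a b : Finset N → ℝ)
    (hab : ∀ S : Finset N, S.Nonempty → a S < b S)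
    (r : N → ℝ) (hr : ∀ i, 0 ≤ r i) (hrN : ∑ i : N, r i = 1) :
    ∀ S : Finset N, S.Nonempty →
      (SSD ((unif (a Finset.univ) (b Finset.univ)).map
            (fun z => (∑ i ∈ S, r i) * z))
          (unif (a S) (b S)) ↔
        a S ≤ (∑ i ∈ S, r i) * a Finset.univ ∧
          (a S + b S) / 2 ≤ (∑ i ∈ S, r i) * ((a Finset.univ + b Finset.univ) / 2)) :=
  ssd_core_r_uniform_iff_general a b hab r hr
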